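/- Let μ be a positive Borel measure with compact support in ℂ^d and let σ be a positive Borel measure with compact support contained in 𝒮(μ). Then 𝒩(μ + σ) = 𝒩(μ), k_j^{μ+σ} = k_j^μ for all j ≥ 0, and K_n^{μ+σ}(z,z) ≤ K_n^μ(z,z) for all z ∈ ℂ^d and all n ≥ 0. -/

import Mathlib

/-!
Because `supp σ ⊆ 𝒮(μ)`, a polynomial vanishes on `supp (μ + σ)` iff it vanishes on `supp μ`.
The kernel of `M̃_k(ν)` consists of the coefficient vectors of the polynomials vanishing on
`supp ν`, so `M̃_k(μ)` and `M̃_k(μ + σ)` have the same rank, the degrees `k_j` agree, and the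
orthonormal polynomials of both measures span the same space `ℒ_n`.
For the kernel, `F = K_n^{μ+σ}(·, z)` lies in `ℒ_n` with `F(z) = ‖F‖²_{μ+σ} = K_n^{μ+σ}(z, z)`;
Cauchy–Schwarz in the `μ`-orthonormal basis and `‖F‖_μ ≤ ‖F‖_{μ+σ}` give
`K_n^{μ+σ}(z, z)² = |F(z)|² ≤ ‖F‖²_μ K_n^μ(z, z) ≤ K_n^{μ+σ}(z, z) K_n^μ(z, z)`.
-/

open MeasureTheory Matrix Finset

namespace CD

variable {d : ℕ}

/-- The `L²(μ)` inner product of two polynomial functions. -/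
noncomputable def inner2 (μ : Measure (Fin d → ℂ)) (f g : MvPolynomial (Fin d) ℂ) : ℂ :=
  ∫ z, MvPolynomial.eval z f * (starRingEnd ℂ) (MvPolynomial.eval z g) ∂μ

/-- The moment matrix `M̃_k(μ)` for an enumeration `α` of multi-indices. -/
noncomputable def momentMatrix (μ : Measure (Fin d → ℂ)) (α : ℕ → (Fin d →₀ ℕ)) (k : ℕ) :
    Matrix (Fin (k + 1)) (Fin (k + 1)) ℂ :=
  Matrix.of fun j ℓ =>
    inner2 μ (MvPolynomial.monomial (α (ℓ : ℕ)) 1) (MvPolynomial.monomial (α (j : ℕ)) 1)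

/-- `k_n^μ = min {k : rank M̃_k(μ) = n+1}`. -/
noncomputable def kdeg (μ : Measure (Fin d → ℂ)) (α : ℕ → (Fin d →₀ ℕ)) (n : ℕ) : ℕ :=
  sInf {k | (momentMatrix μ α k).rank = n + 1}

/-- `deg p ≤ k` with respect to the enumeration `α`. -/
def DegLE (α : ℕ → (Fin d →₀ ℕ)) (p : MvPolynomial (Fin d) ℂ) (k : ℕ) : Prop :=
  ∀ m : ℕ, MvPolynomial.coeff (α m) p ≠ 0 → m ≤ k

/-- `deg p = k` with respect to the enumeration `α`. -/
def DegEq (α : ℕ → (Fin d →₀ ℕ)) (p : MvPolynomial (Fin d) ℂ) (k : ℕ) : Prop :=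
  DegLE α p k ∧ MvPolynomial.coeff (α k) p ≠ 0

/-- An admissible enumeration of all multi-indices: a bijection starting at `0` such that
multiplication by any variable increases the index. -/
def AdmissibleEnum (α : ℕ → (Fin d →₀ ℕ)) : Prop :=
  Function.Bijective α ∧ α 0 = 0 ∧
    ∀ (j : Fin d) (n : ℕ), ∃ k : ℕ, n < k ∧ α k = α n + Finsupp.single j 1

/-- The Christoffel–Darboux kernel `K_n(z,w) = ∑_{j≤n} p_j(z) conj (p_j(w))`. -/
noncomputable def CDkernel (p : ℕ → MvPolynomial (Fin d) ℂ) (n : ℕ) (z w : Fin d → ℂ) : ℂ :=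
  ∑ j ∈ Finset.range (n + 1),
    MvPolynomial.eval z (p j) * (starRingEnd ℂ) (MvPolynomial.eval w (p j))

/-- `p_0, …, p_n` is the Gram–Schmidt orthonormal family in `L²(μ)`:
orthonormal, with `p_m` a linear combination of the monomials `z^{α(k_0)},…,z^{α(k_m)}`
with positive (real) leading coefficient. -/
def IsONBasisUpTo (μ : Measure (Fin d → ℂ)) (α : ℕ → (Fin d →₀ ℕ))
    (p : ℕ → MvPolynomial (Fin d) ℂ) (n : ℕ) : Prop :=
  (∀ i ≤ n, ∀ j ≤ n, inner2 μ (p i) (p j) = if i = j then 1 else 0) ∧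
  (∀ m ≤ n, ∃ c : Fin (m + 1) → ℂ, 0 < (c (Fin.last m)).re ∧ (c (Fin.last m)).im = 0 ∧
      p m = ∑ i : Fin (m + 1), MvPolynomial.monomial (α (kdeg μ α (i : ℕ))) (c i))

/-- The full Gram–Schmidt orthonormal sequence of `μ`. -/
def IsONBasis (μ : Measure (Fin d → ℂ)) (α : ℕ → (Fin d →₀ ℕ))
    (p : ℕ → MvPolynomial (Fin d) ℂ) : Prop :=
  ∀ n, IsONBasisUpTo μ α p n

/-- The (closed) support of a measure. -/
def msupport {X : Type*} [TopologicalSpace X] [MeasurableSpace X] (μ : Measure X) : Set X :=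
  {x | ∀ U : Set X, x ∈ U → IsOpen U → μ U ≠ 0}

/-- `𝒩(μ)`: the ideal of polynomials vanishing on `supp(μ)`. -/
def Nideal (μ : Measure (Fin d → ℂ)) : Set (MvPolynomial (Fin d) ℂ) :=
  {q | ∀ z ∈ msupport μ, MvPolynomial.eval z q = 0}

/-- `𝒩_n(μ) = {p ∈ 𝒩(μ) : deg p ≤ k_n^μ}`. -/
def NidealLE (μ : Measure (Fin d → ℂ)) (α : ℕ → (Fin d →₀ ℕ)) (n : ℕ) :
    Set (MvPolynomial (Fin d) ℂ) :=
  {q | q ∈ Nideal μ ∧ DegLE α q (kdeg μ α n)}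

/-- `𝒮_n(μ)`: the common zero set of `𝒩_n(μ)`. -/
def Svariety (μ : Measure (Fin d → ℂ)) (α : ℕ → (Fin d →₀ ℕ)) (n : ℕ) : Set (Fin d → ℂ) :=
  {z | ∀ q ∈ NidealLE μ α n, MvPolynomial.eval z q = 0}

/-- `𝒮(μ)`: the Zariski closure of `supp(μ)`, i.e. the common zero set of `𝒩(μ)`. -/
def Szar (μ : Measure (Fin d → ℂ)) : Set (Fin d → ℂ) :=
  {z | ∀ q ∈ Nideal μ, MvPolynomial.eval z q = 0}

/-- `ℒ_n(μ)`: the span of `p_0,…,p_n`. -/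
def Lspan (p : ℕ → MvPolynomial (Fin d) ℂ) (n : ℕ) : Set (MvPolynomial (Fin d) ℂ) :=
  {q | ∃ c : Fin (n + 1) → ℂ, q = ∑ j : Fin (n + 1), c j • p (j : ℕ)}

/-- The `L²(μ)` norm of a polynomial. -/
noncomputable def norm2 (μ : Measure (Fin d → ℂ)) (f : MvPolynomial (Fin d) ℂ) : ℝ :=
  Real.sqrt ((inner2 μ f f).re)

/-- Multivariate cosine function `C_n(z,w)`. -/
noncomputable def coskM (p : ℕ → MvPolynomial (Fin d) ℂ) (n : ℕ) (z w : Fin d → ℂ) : ℂ :=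
  CDkernel p n z w /
    ((Real.sqrt ((CDkernel p n z z).re) * Real.sqrt ((CDkernel p n w w).re) : ℝ) : ℂ)

open MvPolynomial

section Support

variable {X : Type*} [TopologicalSpace X] [MeasurableSpace X]

lemma msupport_eq_support (μ : Measure X) : msupport μ = μ.support := by
  simp [msupport, Measure.support_eq_forall_isOpen, pos_iff_ne_zero]

lemma msupport_add (μ σ : Measure X) : msupport (μ + σ) = msupport μ ∪ msupport σ := by
  simp only [msupport_eq_support, Measure.support_add]

lemma ae_mem_msupport [HereditarilyLindelofSpace X] (μ : Measure X) :
    ∀ᵐ x ∂μ, x ∈ msupport μ := by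
  rw [msupport_eq_support]
  exact Measure.support_mem_ae

lemma eq_zero_on_msupport_of_ae_eq_zero {E : Type*} [TopologicalSpace E] [Zero E] [T1Space E]
    {μ : Measure X} {g : X → E} (hg : Continuous g) (h : g =ᵐ[μ] 0) :
    ∀ x ∈ msupport μ, g x = 0 := by
  intro x hx
  by_contra hgx
  exact hx {y | g y ≠ 0} hgx (isOpen_ne.preimage hg) (ae_iff.mp h)

end Support

lemma Nideal_add_of_msupport_subset_Szar {μ σ : Measure (Fin d → ℂ)}
    (hσS : msupport σ ⊆ Szar μ) : Nideal (μ + σ) = Nideal μ := by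
  ext f
  simp only [Nideal, msupport_add, Set.mem_union]
  exact ⟨fun h z hz => h z (.inl hz), fun h z hz => hz.elim (h z) (fun hσ => hσS hσ f h)⟩

section Inner

variable {ν : Measure (Fin d → ℂ)}

lemma inner2_self_eq_ofReal_integral (f : MvPolynomial (Fin d) ℂ) :
    inner2 ν f f = ((∫ z, Complex.normSq (eval z f) ∂ν : ℝ) : ℂ) := by
  simp only [inner2, Complex.mul_conj]
  exact integral_ofReal

lemma inner2_self_re_nonneg (f : MvPolynomial (Fin d) ℂ) : 0 ≤ (inner2 ν f f).re := by
  rw [inner2_self_eq_ofReal_integral, Complex.ofReal_re]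
  exact integral_nonneg fun z => Complex.normSq_nonneg _

lemma inner2_eq_zero_of_mem_Nideal {f : MvPolynomial (Fin d) ℂ} (hf : f ∈ Nideal ν)
    (g : MvPolynomial (Fin d) ℂ) : inner2 ν f g = 0 := by
  refine integral_eq_zero_of_ae ?_
  filter_upwards [ae_mem_msupport ν] with z hz
  simp [hf z hz]

variable [IsFiniteMeasure ν]

lemma integrable_of_isCompact_msupport (hν : IsCompact (msupport ν)) {E : Type*}
    [NormedAddCommGroup E] {g : (Fin d → ℂ) → E} (hg : Continuous g) : Integrable g ν := by
  obtain ⟨C, hC⟩ := hν.exists_bound_of_continuousOn hg.continuousOn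
  refine ⟨hg.aestronglyMeasurable, HasFiniteIntegral.of_bounded (C := C) ?_⟩
  filter_upwards [ae_mem_msupport ν] with z hz using hC z hz

lemma integrable_eval_mul_conj_eval (hν : IsCompact (msupport ν)) (f g : MvPolynomial (Fin d) ℂ) :
    Integrable (fun z => eval z f * starRingEnd ℂ (eval z g)) ν :=
  integrable_of_isCompact_msupport hν
    (f.continuous_eval.mul (Complex.continuous_conj.comp g.continuous_eval))

noncomputable def inner2ₛₗ (hν : IsCompact (msupport ν)) :
    MvPolynomial (Fin d) ℂ →ₗ[ℂ] MvPolynomial (Fin d) ℂ →ₗ⋆[ℂ] ℂ :=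
  LinearMap.mk₂'ₛₗ _ _ (inner2 ν)
    (fun f₁ f₂ g => by
      simp only [inner2, map_add, add_mul]
      exact integral_add (integrable_eval_mul_conj_eval hν _ _)
        (integrable_eval_mul_conj_eval hν _ _))
    (fun c f g => by
      simp only [inner2, smul_eval, mul_assoc, RingHom.id_apply, smul_eq_mul]
      exact integral_const_mul _ _)
    (fun f g₁ g₂ => by
      simp only [inner2, map_add, mul_add]
      exact integral_add (integrable_eval_mul_conj_eval hν _ _)
        (integrable_eval_mul_conj_eval hν _ _))
    (fun c f g => by
      simp only [inner2, smul_eval, map_mul, smul_eq_mul, mul_left_comm _ ((starRingEnd ℂ) c)]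
      exact integral_const_mul _ _)

lemma inner2ₛₗ_apply (hν : IsCompact (msupport ν)) (f g : MvPolynomial (Fin d) ℂ) :
    inner2ₛₗ hν f g = inner2 ν f g := rfl

lemma mem_Nideal_of_inner2_self_eq_zero (hν : IsCompact (msupport ν))
    {f : MvPolynomial (Fin d) ℂ} (h : inner2 ν f f = 0) : f ∈ Nideal ν := by
  have hcont : Continuous fun z => Complex.normSq (eval z f) :=
    Complex.continuous_normSq.comp f.continuous_eval
  rw [inner2_self_eq_ofReal_integral, Complex.ofReal_eq_zero,
    integral_eq_zero_iff_of_nonneg (fun z => Complex.normSq_nonneg _)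
      (integrable_of_isCompact_msupport hν hcont)] at h
  intro z hz
  simpa using eq_zero_on_msupport_of_ae_eq_zero hcont h z hz

lemma inner2_add_measure {μ : Measure (Fin d → ℂ)} [IsFiniteMeasure μ]
    (hμ : IsCompact (msupport μ)) (hν : IsCompact (msupport ν)) (f g : MvPolynomial (Fin d) ℂ) :
    inner2 (μ + ν) f g = inner2 μ f g + inner2 ν f g :=
  integral_add_measure (integrable_eval_mul_conj_eval hμ f g) (integrable_eval_mul_conj_eval hν f g)

end Inner

section Orthonormal

variable {ν : Measure (Fin d → ℂ)} {p : ℕ → MvPolynomial (Fin d) ℂ} {n : ℕ}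

def IsOrthonormalUpTo (ν : Measure (Fin d → ℂ)) (p : ℕ → MvPolynomial (Fin d) ℂ) (n : ℕ) :
    Prop :=
  ∀ i ≤ n, ∀ j ≤ n, inner2 ν (p i) (p j) = if i = j then 1 else 0

lemma IsONBasisUpTo.isOrthonormalUpTo {α : ℕ → (Fin d →₀ ℕ)} (hp : IsONBasisUpTo ν α p n) :
    IsOrthonormalUpTo ν p n :=
  hp.1

lemma CDkernel_self (p : ℕ → MvPolynomial (Fin d) ℂ) (n : ℕ) (z : Fin d → ℂ) :
    CDkernel p n z z = ((∑ j ∈ range (n + 1), Complex.normSq (eval z (p j)) : ℝ) : ℂ) := by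
  simp [CDkernel, Complex.mul_conj]

lemma CDkernel_self_re_nonneg (p : ℕ → MvPolynomial (Fin d) ℂ) (n : ℕ) (z : Fin d → ℂ) :
    0 ≤ (CDkernel p n z z).re := by
  rw [CDkernel_self, Complex.ofReal_re]
  exact sum_nonneg fun j _ => Complex.normSq_nonneg _

noncomputable def CDkernelPoly (p : ℕ → MvPolynomial (Fin d) ℂ) (n : ℕ) (z : Fin d → ℂ) :
    MvPolynomial (Fin d) ℂ :=
  ∑ j ∈ range (n + 1), starRingEnd ℂ (eval z (p j)) • p j

lemma eval_CDkernelPoly (p : ℕ → MvPolynomial (Fin d) ℂ) (n : ℕ) (w z : Fin d → ℂ) :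
    eval w (CDkernelPoly p n z) = CDkernel p n w z := by
  simp [CDkernelPoly, CDkernel, mul_comm]

variable [IsFiniteMeasure ν]

lemma inner2_sum_smul_self (hν : IsCompact (msupport ν)) (hp : IsOrthonormalUpTo ν p n)
    (c : ℕ → ℂ) :
    inner2 ν (∑ i ∈ range (n + 1), c i • p i) (∑ i ∈ range (n + 1), c i • p i) =
      ((∑ i ∈ range (n + 1), Complex.normSq (c i) : ℝ) : ℂ) := by
  rw [← inner2ₛₗ_apply hν]
  simp only [map_sum, LinearMap.map_smulₛₗ, LinearMap.sum_apply, LinearMap.smul_apply,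
    inner2ₛₗ_apply, smul_eq_mul, Complex.ofReal_sum]
  refine sum_congr rfl fun j hj => ?_
  have hjn := mem_range_succ_iff.mp hj
  rw [sum_eq_single_of_mem j hj fun i hi hij => by
      rw [hp i (mem_range_succ_iff.mp hi) j hjn, if_neg hij, mul_zero],
    hp j hjn j hjn, if_pos rfl, RingHom.id_apply, mul_one, Complex.normSq_eq_conj_mul_self]

lemma inner2_CDkernelPoly_self (hν : IsCompact (msupport ν)) (hp : IsOrthonormalUpTo ν p n)
    (z : Fin d → ℂ) : inner2 ν (CDkernelPoly p n z) (CDkernelPoly p n z) = CDkernel p n z z := by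
  simp only [CDkernelPoly, inner2_sum_smul_self hν hp, CDkernel_self, Complex.normSq_conj]

lemma normSq_eval_le_of_mem_span (hν : IsCompact (msupport ν)) (hp : IsOrthonormalUpTo ν p n)
    {f : MvPolynomial (Fin d) ℂ} (hf : f ∈ Submodule.span ℂ (p '' ↑(range (n + 1))))
    (z : Fin d → ℂ) :
    Complex.normSq (eval z f) ≤ (inner2 ν f f).re * (CDkernel p n z z).re := by
  obtain ⟨c, rfl⟩ := (Submodule.mem_span_image_finset_iff_exists_fun' ℂ).mp hf
  rw [inner2_sum_smul_self hν hp, CDkernel_self, Complex.ofReal_re, Complex.ofReal_re]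
  simp only [Complex.normSq_eq_norm_sq, eval_sum, smul_eval]
  calc ‖∑ i ∈ range (n + 1), c i * eval z (p i)‖ ^ 2
      ≤ (∑ i ∈ range (n + 1), ‖c i‖ * ‖eval z (p i)‖) ^ 2 := by
        gcongr
        exact (norm_sum_le _ _).trans_eq (sum_congr rfl fun i _ => norm_mul _ _)
    _ ≤ (∑ i ∈ range (n + 1), ‖c i‖ ^ 2) * ∑ i ∈ range (n + 1), ‖eval z (p i)‖ ^ 2 :=
        sum_mul_sq_le_sq_mul_sq _ _ _

theorem CDkernel_re_le_of_inner2_le {μ ν : Measure (Fin d → ℂ)} [IsFiniteMeasure μ]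
    [IsFiniteMeasure ν] (hμ : IsCompact (msupport μ)) (hν : IsCompact (msupport ν))
    (hle : ∀ f, (inner2 μ f f).re ≤ (inner2 ν f f).re) {p q : ℕ → MvPolynomial (Fin d) ℂ}
    (hp : IsOrthonormalUpTo μ p n) (hq : IsOrthonormalUpTo ν q n)
    (hspan : Submodule.span ℂ (q '' ↑(range (n + 1))) ≤ Submodule.span ℂ (p '' ↑(range (n + 1))))
    (z : Fin d → ℂ) : (CDkernel q n z z).re ≤ (CDkernel p n z z).re := by
  set F := CDkernelPoly q n z
  have hF : F ∈ Submodule.span ℂ (p '' ↑(range (n + 1))) :=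
    hspan <| Submodule.sum_mem _ fun j hj =>
      Submodule.smul_mem _ _ (Submodule.subset_span ⟨j, hj, rfl⟩)
  have hKp := CDkernel_self_re_nonneg p n z
  have hKq := CDkernel_self_re_nonneg q n z
  have key : (CDkernel q n z z).re ^ 2 ≤ (CDkernel q n z z).re * (CDkernel p n z z).re :=
    calc (CDkernel q n z z).re ^ 2 = Complex.normSq (eval z F) := by
          rw [eval_CDkernelPoly, CDkernel_self, Complex.normSq_ofReal, Complex.ofReal_re, sq]
      _ ≤ (inner2 μ F F).re * (CDkernel p n z z).re := normSq_eval_le_of_mem_span hμ hp hF z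
      _ ≤ (inner2 ν F F).re * (CDkernel p n z z).re := mul_le_mul_of_nonneg_right (hle F) hKp
      _ = (CDkernel q n z z).re * (CDkernel p n z z).re := by
          rw [inner2_CDkernelPoly_self hν hq]
  nlinarith

end Orthonormal

lemma IsONBasisUpTo.span_eq {ν : Measure (Fin d → ℂ)} {α : ℕ → (Fin d →₀ ℕ)}
    {p : ℕ → MvPolynomial (Fin d) ℂ} {n : ℕ} (hp : IsONBasisUpTo ν α p n) :
    Submodule.span ℂ (p '' ↑(range (n + 1))) =
      Submodule.span ℂ ((fun i => monomial (α (kdeg ν α i)) (1 : ℂ)) '' ↑(range (n + 1))) := by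
  set M := fun i => monomial (α (kdeg ν α i)) (1 : ℂ)
  have hmono : ∀ i (a : ℂ), monomial (α (kdeg ν α i)) a = a • M i := by
    simp [M, smul_monomial]
  apply le_antisymm
  · rw [Submodule.span_le]
    rintro _ ⟨m, hm, rfl⟩
    obtain ⟨c, -, -, hpm⟩ := hp.2 m (mem_range_succ_iff.mp hm)
    rw [hpm]
    refine Submodule.sum_mem _ fun i _ => ?_
    rw [hmono]
    refine Submodule.smul_mem _ _ (Submodule.subset_span ⟨i, ?_, rfl⟩)
    simp only [coe_range, Set.mem_Iio] at hm ⊢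
    omega
  · rw [Submodule.span_le]
    rintro _ ⟨m, hm, rfl⟩
    induction m using Nat.strong_induction_on with
    | _ m ih =>
    obtain ⟨c, hre, -, hpm⟩ := hp.2 m (mem_range_succ_iff.mp hm)
    have hc : c (Fin.last m) ≠ 0 := fun h => by simp [h] at hre
    have hMm : M m = (c (Fin.last m))⁻¹ • (p m - ∑ i : Fin m, c i.castSucc • M i) := by
      rw [hpm, Fin.sum_univ_castSucc]
      simp only [hmono, Fin.val_castSucc, Fin.val_last, add_sub_cancel_left, smul_smul,
        inv_mul_cancel₀ hc, one_smul]
    rw [hMm]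
    refine Submodule.smul_mem _ _ (Submodule.sub_mem _ (Submodule.subset_span ⟨m, hm, rfl⟩)
      (Submodule.sum_mem _ fun i _ => Submodule.smul_mem _ _ (ih i i.isLt ?_)))
    simp only [coe_range, Set.mem_Iio] at hm ⊢
    omega

theorem _root_.Matrix.rank_eq_of_ker_mulVecLin_eq {K m n : Type*} [Field K] [Fintype n]
    {A B : Matrix m n K} (h : LinearMap.ker A.mulVecLin = LinearMap.ker B.mulVecLin) :
    A.rank = B.rank := by
  have hA := A.mulVecLin.finrank_range_add_finrank_ker
  have hB := B.mulVecLin.finrank_range_add_finrank_ker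
  rw [h] at hA
  unfold Matrix.rank
  omega

section MomentMatrix

variable {ν : Measure (Fin d → ℂ)} [IsFiniteMeasure ν] {α : ℕ → (Fin d →₀ ℕ)} {k : ℕ}

lemma momentMatrix_mulVec_apply (hν : IsCompact (msupport ν)) (c : Fin (k + 1) → ℂ)
    (j : Fin (k + 1)) :
    (momentMatrix ν α k *ᵥ c) j =
      inner2 ν (∑ ℓ : Fin (k + 1), c ℓ • monomial (α ℓ) 1) (monomial (α j) 1) := by
  rw [← inner2ₛₗ_apply hν]
  simp [mulVec, dotProduct, momentMatrix, inner2ₛₗ_apply, mul_comm]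

lemma momentMatrix_mulVec_eq_zero_iff (hν : IsCompact (msupport ν)) (c : Fin (k + 1) → ℂ) :
    momentMatrix ν α k *ᵥ c = 0 ↔ ∑ ℓ : Fin (k + 1), c ℓ • monomial (α ℓ) 1 ∈ Nideal ν := by
  set f := ∑ ℓ : Fin (k + 1), c ℓ • monomial (α ℓ) (1 : ℂ) with hf
  refine ⟨fun h => mem_Nideal_of_inner2_self_eq_zero hν ?_, fun hf0 => funext fun j => ?_⟩
  · calc inner2 ν f f = inner2ₛₗ hν f (∑ j : Fin (k + 1), c j • monomial (α j) 1) := rfl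
      _ = ∑ j, starRingEnd ℂ (c j) * (momentMatrix ν α k *ᵥ c) j := by
        rw [map_sum]
        simp only [LinearMap.map_smulₛₗ, smul_eq_mul, inner2ₛₗ_apply,
          momentMatrix_mulVec_apply hν, ← hf]
      _ = 0 := by simp [h]
  · rw [momentMatrix_mulVec_apply hν, ← hf, inner2_eq_zero_of_mem_Nideal hf0, Pi.zero_apply]

end MomentMatrix

lemma kdeg_eq_of_Nideal_eq {μ ν : Measure (Fin d → ℂ)} [IsFiniteMeasure μ] [IsFiniteMeasure ν]
    (hμ : IsCompact (msupport μ)) (hν : IsCompact (msupport ν)) (h : Nideal μ = Nideal ν)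
    (α : ℕ → (Fin d →₀ ℕ)) (j : ℕ) : kdeg μ α j = kdeg ν α j := by
  have hrank : ∀ k, (momentMatrix μ α k).rank = (momentMatrix ν α k).rank := fun k =>
    Matrix.rank_eq_of_ker_mulVecLin_eq <| by
      ext c
      simp only [LinearMap.mem_ker, mulVecLin_apply, momentMatrix_mulVec_eq_zero_iff hμ,
        momentMatrix_mulVec_eq_zero_iff hν, h]
  simp only [kdeg, hrank]

theorem statement17_general (μ σ : Measure (Fin d → ℂ)) [IsFiniteMeasure μ] [IsFiniteMeasure σ]
    (hμc : IsCompact (msupport μ)) (hσc : IsCompact (msupport σ))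
    (hσS : msupport σ ⊆ Szar μ)
    (α : ℕ → (Fin d →₀ ℕ)) :
    Nideal (μ + σ) = Nideal μ ∧
    (∀ j : ℕ, kdeg (μ + σ) α j = kdeg μ α j) ∧
    ∀ n : ℕ, ∀ p q : ℕ → MvPolynomial (Fin d) ℂ,
      IsONBasisUpTo μ α p n → IsONBasisUpTo (μ + σ) α q n →
      ∀ z : Fin d → ℂ, (CDkernel q n z z).re ≤ (CDkernel p n z z).re := by
  have hNideal := Nideal_add_of_msupport_subset_Szar hσS
  have hμσc : IsCompact (msupport (μ + σ)) := by
    rw [msupport_add]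
    exact hμc.union hσc
  have hkdeg := kdeg_eq_of_Nideal_eq hμσc hμc hNideal α
  refine ⟨hNideal, hkdeg, fun n p q hp hq z => ?_⟩
  have hle : ∀ f, (inner2 μ f f).re ≤ (inner2 (μ + σ) f f).re := fun f => by
    rw [inner2_add_measure hμc hσc, Complex.add_re]
    exact le_add_of_nonneg_right (inner2_self_re_nonneg f)
  refine CDkernel_re_le_of_inner2_le hμc hμσc hle hp.isOrthonormalUpTo hq.isOrthonormalUpTo
    (le_of_eq ?_) z
  simp only [hp.span_eq, hq.span_eq, hkdeg]

/-- Adding a positive measure supported in the Zariski closure of `supp(μ)` does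
not change the null ideal nor the degree sequence, and can only decrease the
Christoffel–Darboux kernel. -/
theorem statement17 (μ σ : Measure (Fin d → ℂ)) [IsFiniteMeasure μ] [IsFiniteMeasure σ]
    (hμ0 : μ ≠ 0) (hμc : IsCompact (msupport μ)) (hσc : IsCompact (msupport σ))
    (hσS : msupport σ ⊆ Szar μ)
    (α : ℕ → (Fin d →₀ ℕ)) (hα : AdmissibleEnum α) :
    Nideal (μ + σ) = Nideal μ ∧
    (∀ j : ℕ, kdeg (μ + σ) α j = kdeg μ α j) ∧
    ∀ n : ℕ, ∀ p q : ℕ → MvPolynomial (Fin d) ℂ,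
      IsONBasisUpTo μ α p n → IsONBasisUpTo (μ + σ) α q n →
      ∀ z : Fin d → ℂ, (CDkernel q n z z).re ≤ (CDkernel p n z z).re :=
  statement17_general μ σ hμc hσc hσS α

end CD
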